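/- For every q ∈ (−1, 0] and every real v ≥ 1, one has v^{q+1} − 1 − (q+1)(v−1)·v^{q/2} ≤ 0. -/

import Mathlib

/-!
With `p = q + 1 ∈ (0, 1]` and `s = log v / 2 ≥ 0`, the identity
`x ^ a - 1 = 2 x ^ (a / 2) sinh (a log x / 2)` writes `v ^ p - 1` and `(v - 1) v ^ (q / 2)`
as `2 v ^ (p / 2)` times `sinh (p s)` and `sinh s` respectively. The claim thus reduces to
`sinh (p s) ≤ p sinh s`, which holds because `sinh` is convex on `[0, ∞)` and vanishes at `0`.
-/

open Real

theorem ConvexOn.map_mul_le_of_map_zero {f : ℝ → ℝ} (hf : ConvexOn ℝ (Set.Ici 0) f) (hf0 : f 0 = 0)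
    {p s : ℝ} (hp0 : 0 ≤ p) (hp1 : p ≤ 1) (hs : 0 ≤ s) : f (p * s) ≤ p * f s := by
  simpa [hf0] using hf.2 (Set.mem_Ici.2 hs) (Set.self_mem_Ici (a := 0)) hp0 (sub_nonneg.2 hp1)
    (add_sub_cancel p 1)

theorem convexOn_sinh_Ici : ConvexOn ℝ (Set.Ici 0) sinh := by
  refine convexOn_of_deriv2_nonneg (convex_Ici 0) continuous_sinh.continuousOn
    differentiable_sinh.differentiableOn (by simpa using differentiable_cosh.differentiableOn) ?_
  intro x hx
  rw [interior_Ici] at hx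
  simpa using sinh_nonneg_iff.2 hx.le

theorem rpow_sub_one_eq_mul_sinh {x : ℝ} (hx : 0 < x) (a : ℝ) :
    x ^ a - 1 = 2 * x ^ (a / 2) * sinh (a * log x / 2) := by
  have hsq : x ^ a = x ^ (a / 2) * x ^ (a / 2) := by rw [← rpow_add hx]; ring_nf
  have hE : x ^ (a / 2) = exp (a * log x / 2) := by rw [rpow_def_of_pos hx]; ring_nf
  rw [sinh_eq, hsq, hE, exp_neg]
  field_simp

/-- For every `q ∈ (−1, 0]` and real `v ≥ 1`,
`v^{q+1} − 1 − (q+1)(v−1)·v^{q/2} ≤ 0`. -/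
theorem stmt_6 (q : ℝ) (hq1 : -1 < q) (hq0 : q ≤ 0) (v : ℝ) (hv : 1 ≤ v) :
    v ^ (q + 1) - 1 - (q + 1) * (v - 1) * v ^ (q / 2) ≤ 0 := by
  have hv0 : 0 < v := one_pos.trans_le hv
  set s := log v / 2
  have hs : 0 ≤ s := div_nonneg (log_nonneg hv) zero_le_two
  have hlhs : v ^ (q + 1) - 1 = 2 * v ^ ((q + 1) / 2) * sinh ((q + 1) * s) := by
    rw [rpow_sub_one_eq_mul_sinh hv0, mul_div_assoc]
  have hrhs : (v - 1) * v ^ (q / 2) = 2 * v ^ ((q + 1) / 2) * sinh s := by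
    have h := rpow_sub_one_eq_mul_sinh hv0 1
    rw [rpow_one, one_mul] at h
    rw [h, add_div, rpow_add hv0]
    ring
  have hsinh : sinh ((q + 1) * s) ≤ (q + 1) * sinh s :=
    convexOn_sinh_Ici.map_mul_le_of_map_zero sinh_zero (by linarith) (by linarith) hs
  rw [mul_assoc, hlhs, hrhs]
  calc 2 * v ^ ((q + 1) / 2) * sinh ((q + 1) * s) - (q + 1) * (2 * v ^ ((q + 1) / 2) * sinh s)
      = 2 * v ^ ((q + 1) / 2) * (sinh ((q + 1) * s) - (q + 1) * sinh s) := by ring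
    _ ≤ 0 := mul_nonpos_of_nonneg_of_nonpos (by positivity) (sub_nonpos.2 hsinh)
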